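/- Let S = (F_{p^n},+,⋆) be a finite presemifield with x⋆y = F(x,y) additive in each argument, let F_q be a subfield of F_{p^n}, and suppose there exists a field automorphism σ of F_q such that F(x, λy) = σ(λ)·F(x,y) for all x,y ∈ F_{p^n} and all λ ∈ F_q (F is F_q-semilinear in y). Then for every λ ∈ F_q the scalar map t_λ : x ↦ λx belongs to the right-nucleus set N_r(C) = {μ ∈ End_{F_p}(F_{p^n}) : μ∘φ ∈ C for all φ ∈ C}, and every element of N_r(C) is F_q-linear. -/

import Mathlib

/-- A finite presemifield of characteristic `p`: multiplication is additive
(equivalently, `ZMod p`-linear) in each argument and has no zero divisors.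
For `y`, `mul.flip y` is the right-multiplication map `φ_y : x ↦ x ⋆ y`. -/
structure Presemifield (p : ℕ) (S : Type*) [AddCommGroup S] [Module (ZMod p) S] where
  mul : S →ₗ[ZMod p] S →ₗ[ZMod p] S
  eq_zero_or_eq_zero : ∀ x y : S, mul x y = 0 → x = 0 ∨ y = 0

/-- The spread set `C = {φ_y : y ∈ S}` of a presemifield. -/
def Presemifield.spread {p : ℕ} {S : Type*} [AddCommGroup S] [Module (ZMod p) S]
    (M : Presemifield p S) : Set (S →ₗ[ZMod p] S) :=
  Set.range M.mul.flip

/-- The right-nucleus set `N_r(D) = {μ : μ∘φ ∈ D for all φ ∈ D}`. -/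
def rightNucleusSet {p : ℕ} {S : Type*} [AddCommGroup S] [Module (ZMod p) S]
    (D : Set (S →ₗ[ZMod p] S)) : Set (S →ₗ[ZMod p] S) :=
  {μ | ∀ φ ∈ D, μ ∘ₗ φ ∈ D}

/-!
Multiplication by `λ ∈ F_q` commutes past the second argument of `⋆` up to `σ`, so it maps
`φ_y` to `φ_{σ⁻¹(λ) y}` and lies in the right nucleus `N_r(C)`. Since `C` is closed under
addition, `N_r(C)` is a subalgebra of `End(F_{p^n})`; since the nonzero maps in `C` are
bijective, so are the nonzero elements of `N_r(C)`. Hence `N_r(C)` is a finite domain, hence a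
field by Wedderburn's theorem, and every `μ ∈ N_r(C)` commutes with each `t_λ`.
-/

open Function

namespace Presemifield

section

variable {p : ℕ} {S : Type*} [AddCommGroup S] [Module (ZMod p) S] (M : Presemifield p S)

theorem mul_flip_injective {y : S} (hy : y ≠ 0) : Injective (M.mul.flip y) := by
  rw [← LinearMap.ker_eq_bot, LinearMap.ker_eq_bot']
  intro x hx
  exact (M.eq_zero_or_eq_zero x y hx).resolve_right hy

theorem mul_flip_surjective [Finite S] {y : S} (hy : y ≠ 0) : Surjective (M.mul.flip y) :=
  Finite.injective_iff_surjective.mp (M.mul_flip_injective hy)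

def rightNucleus : Subalgebra (ZMod p) (Module.End (ZMod p) S) where
  carrier := rightNucleusSet M.spread
  mul_mem' {μ ν} hμ hν φ hφ := by
    rw [Module.End.mul_eq_comp, LinearMap.comp_assoc]
    exact hμ _ (hν φ hφ)
  add_mem' {μ ν} hμ hν φ hφ := by
    obtain ⟨y, hy⟩ := hμ φ hφ
    obtain ⟨z, hz⟩ := hν φ hφ
    exact ⟨y + z, by rw [map_add, hy, hz, LinearMap.add_comp]⟩
  algebraMap_mem' c := by
    rintro _ ⟨y, rfl⟩
    refine ⟨c • y, ?_⟩
    ext x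
    simp [Module.algebraMap_end_apply]

theorem injective_of_mem_rightNucleus [Finite S] [Nontrivial S] {μ : Module.End (ZMod p) S}
    (hμ : μ ∈ M.rightNucleus) (hμ0 : μ ≠ 0) : Injective μ := by
  rw [← LinearMap.ker_eq_bot, LinearMap.ker_eq_bot']
  intro z hz
  by_contra hz0
  obtain ⟨y, hy⟩ := exists_ne (0 : S)
  obtain ⟨x, rfl⟩ := M.mul_flip_surjective hy z
  obtain ⟨w, hw⟩ := hμ _ ⟨y, rfl⟩
  have hx : x ≠ 0 := by rintro rfl; simp at hz0
  -- `x ⋆ w = μ (x ⋆ y) = 0` forces `w = 0`, i.e. `μ ∘ φ_y = 0` with `φ_y` onto.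
  have hxw : M.mul x w = 0 := by
    rw [← hz]
    simpa using LinearMap.congr_fun hw x
  obtain rfl := (M.eq_zero_or_eq_zero x w hxw).resolve_left hx
  refine hμ0 (LinearMap.ext fun v => ?_)
  obtain ⟨u, rfl⟩ := M.mul_flip_surjective hy v
  simpa using LinearMap.congr_fun hw.symm u

instance [Finite S] : Finite M.rightNucleus :=
  haveI : Finite (Module.End (ZMod p) S) := Finite.of_injective _ DFunLike.coe_injective
  Subtype.finite

instance [Nontrivial S] : Nontrivial M.rightNucleus :=
  ⟨⟨1, 0, fun h => one_ne_zero (congrArg Subtype.val h : (1 : Module.End (ZMod p) S) = 0)⟩⟩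

instance [Finite S] [Nontrivial S] : NoZeroDivisors M.rightNucleus where
  eq_zero_or_eq_zero_of_mul_eq_zero {μ ν} h := by
    refine or_iff_not_imp_left.mpr fun hμ => Subtype.ext (LinearMap.ext fun x => ?_)
    have hinj := M.injective_of_mem_rightNucleus μ.2 fun h => hμ (Subtype.ext h)
    exact hinj (by simpa using LinearMap.congr_fun (congrArg Subtype.val h) x)

theorem isField_rightNucleus [Finite S] [Nontrivial S] : IsField M.rightNucleus :=
  haveI := NoZeroDivisors.to_isDomain M.rightNucleus
  Finite.isDomain_to_isField _

theorem commute_of_mem_rightNucleus [Finite S] [Nontrivial S] {μ ν : Module.End (ZMod p) S}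
    (hμ : μ ∈ M.rightNucleus) (hν : ν ∈ M.rightNucleus) : Commute μ ν :=
  congrArg Subtype.val (M.isField_rightNucleus.mul_comm ⟨μ, hμ⟩ ⟨ν, hν⟩)

end

theorem mulLeft_mem_rightNucleusSet {p : ℕ} {S : Type*} [Ring S] [Algebra (ZMod p) S]
    (M : Presemifield p S) {a b : S} (hab : ∀ x y, M.mul x (b * y) = a * M.mul x y) :
    LinearMap.mulLeft (ZMod p) a ∈ rightNucleusSet M.spread := by
  rintro _ ⟨y, rfl⟩
  exact ⟨b * y, LinearMap.ext fun x => by simp [hab]⟩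

end Presemifield

theorem statement9_general (p n : ℕ) [Fact p.Prime]
    (M : Presemifield p (GaloisField p n))
    (K : Subfield (GaloisField p n)) (σ : K ≃+* K)
    (hσ : ∀ (l : K) (x y : GaloisField p n),
      M.mul x ((l : GaloisField p n) * y) = (σ l : GaloisField p n) * M.mul x y) :
    (∀ l : K, LinearMap.mulLeft (ZMod p) (l : GaloisField p n) ∈
      rightNucleusSet M.spread) ∧
    (∀ μ ∈ rightNucleusSet M.spread, ∀ (l : K) (x : GaloisField p n),
      μ ((l : GaloisField p n) * x) = (l : GaloisField p n) * μ x) := by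
  have mulLeft_mem (l : K) : LinearMap.mulLeft (ZMod p) (l : GaloisField p n) ∈
      rightNucleusSet M.spread :=
    M.mulLeft_mem_rightNucleusSet fun x y => by simpa using hσ (σ.symm l) x y
  exact ⟨mulLeft_mem, fun μ hμ l x =>
    LinearMap.congr_fun (M.commute_of_mem_rightNucleus hμ (mulLeft_mem l)).eq x⟩

theorem statement9 (p n : ℕ) [Fact p.Prime] (hn : n ≠ 0)
    (M : Presemifield p (GaloisField p n))
    (K : Subfield (GaloisField p n)) (σ : K ≃+* K)
    (hσ : ∀ (l : K) (x y : GaloisField p n),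
      M.mul x ((l : GaloisField p n) * y) = (σ l : GaloisField p n) * M.mul x y) :
    (∀ l : K, LinearMap.mulLeft (ZMod p) (l : GaloisField p n) ∈
      rightNucleusSet M.spread) ∧
    (∀ μ ∈ rightNucleusSet M.spread, ∀ (l : K) (x : GaloisField p n),
      μ ((l : GaloisField p n) * x) = (l : GaloisField p n) * μ x) :=
  statement9_general p n M K σ hσ
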